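/- Let s be a list of natural numbers with C(s) = 1 that is not a well-formed expression. Then there exists k with 0 < k < length s such that the k-rotation of s is a well-formed expression; i.e., every list that is a permutation of a well-formed expression but is not itself well-formed is a nontrivial rotation of a well-formed expression. -/

import Mathlib

/-- `C v` is the length of `v` minus the sum of its entries. -/
def C (v : List ℕ) : ℤ := (v.length : ℤ) - (v.sum : ℤ)

/-- A list of natural numbers is a well-formed expression (Polish notation
encoding of an ordered rooted tree by outdegrees) if it is of the form
`d :: (w₁ ++ ⋯ ++ w_d)` where each `wᵢ` is a well-formed expression. -/
inductive IsWF : List ℕ → Prop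
  | node (d : ℕ) (ws : List (List ℕ)) (hlen : ws.length = d)
      (h : ∀ w ∈ ws, IsWF w) : IsWF (d :: ws.flatten)

/-- The `k`-rotation of `s = u ++ v` with `v` of length `k` is `v ++ u`. -/
def krot (k : ℕ) (s : List ℕ) : List ℕ :=
  s.drop (s.length - k) ++ s.take (s.length - k)

/-!
A list `t` with `C t = d` all of whose proper prefixes have `C < d` is a concatenation of `d`
well-formed expressions: its head `a` turns the tail into a concatenation of `a + (d - 1)` of
them, the first `a` of which are the subtrees below `a`. Hence `s` is well formed once
`C s = 1` and every proper prefix has `C ≤ 0`. For arbitrary `s` with `C s = 1`, rotating `s`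
to begin right after the first prefix at which `C` is maximal yields such a list (the cycle
lemma); that prefix is nonempty because `C s > C []`, and it is all of `s` only when `s` is
already well formed.
-/

@[simp]
lemma C_nil : C [] = 0 := rfl

@[simp]
lemma C_cons (a : ℕ) (t : List ℕ) : C (a :: t) = 1 - a + C t := by
  simp only [C, List.length_cons, List.sum_cons]
  push_cast
  ring

lemma C_append (u v : List ℕ) : C (u ++ v) = C u + C v := by
  simp only [C, List.length_append, List.sum_append]
  push_cast
  ring

lemma C_rotate (s : List ℕ) (m : ℕ) : C (s.rotate m) = C s := by
  simp only [C, List.length_rotate, (List.rotate_perm s m).sum_eq]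

lemma exists_flatten_eq_of_C_take_lt (t : List ℕ) (d : ℕ) (hC : C t = d)
    (hpre : ∀ j < t.length, C (t.take j) < d) :
    ∃ ws : List (List ℕ), ws.length = d ∧ (∀ w ∈ ws, IsWF w) ∧ ws.flatten = t := by
  induction t generalizing d with
  | nil =>
    obtain rfl : d = 0 := by simpa using hC.symm
    exact ⟨[], rfl, by simp, rfl⟩
  | cons a t ih =>
    obtain ⟨e, rfl⟩ : ∃ e, d = e + 1 :=
      Nat.exists_eq_add_one.mpr (by simpa using hpre 0 (by simp))
    obtain ⟨ws, hlen, hwf, hflat⟩ := ih (a + e) (by rw [C_cons] at hC; push_cast at hC ⊢; omega) fun j hj => by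
      have := hpre (j + 1) (by simpa using hj)
      simp only [List.take_succ_cons, C_cons] at this
      push_cast
      omega
    have hhead : IsWF (a :: (ws.take a).flatten) :=
      IsWF.node a _ (by simp [hlen]) fun w hw => hwf w (List.mem_of_mem_take hw)
    refine ⟨(a :: (ws.take a).flatten) :: ws.drop a, by simp [hlen], ?_, ?_⟩
    · rintro w (_ | ⟨_, hw⟩)
      exacts [hhead, hwf w (List.mem_of_mem_drop hw)]
    · rw [List.flatten_cons, List.cons_append, ← List.flatten_append, List.take_append_drop, hflat]

lemma isWF_of_C_take_lt (s : List ℕ) (hC : C s = 1) (hpre : ∀ j < s.length, C (s.take j) < 1) :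
    IsWF s := by
  obtain ⟨ws, hlen, hwf, rfl⟩ := exists_flatten_eq_of_C_take_lt s 1 (by simpa using hC) hpre
  obtain ⟨w, rfl⟩ := List.length_eq_one_iff.mp hlen
  simpa using hwf w (by simp)

lemma exists_first_argmax {α : Type*} [LinearOrder α] (g : ℕ → α) (n : ℕ) :
    ∃ m ≤ n, (∀ i ≤ n, g i ≤ g m) ∧ ∀ i < m, g i < g m := by
  classical
  have hex : ∃ m, m ≤ n ∧ ∀ i ≤ n, g i ≤ g m := by
    obtain ⟨m, hm, hmax⟩ := (Finset.range (n + 1)).exists_max_image g ⟨0, by simp⟩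
    exact ⟨m, Nat.lt_succ_iff.mp (Finset.mem_range.mp hm),
      fun i hi => hmax i (Finset.mem_range.mpr (Nat.lt_succ_of_le hi))⟩
  obtain ⟨hle, hmax⟩ := Nat.find_spec hex
  refine ⟨Nat.find hex, hle, hmax, fun i hi => lt_of_not_ge fun hge => ?_⟩
  exact Nat.find_min hex hi ⟨hi.le.trans hle, fun j hj => (hmax j hj).trans hge⟩

lemma C_take_rotate_lt (s : List ℕ) (hpos : 0 < C s) (m : ℕ) (hm : m ≤ s.length)
    (hmax : ∀ i ≤ s.length, C (s.take i) ≤ C (s.take m))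
    (hfirst : ∀ i < m, C (s.take i) < C (s.take m)) :
    ∀ j < s.length, C ((s.rotate m).take j) < C s := by
  intro j hj
  have hsplit : C s = C (s.take m) + C (s.drop m) := by
    rw [← C_append, List.take_append_drop]
  have hdrop : (s.drop m).length = s.length - m := List.length_drop
  rw [List.rotate_eq_drop_append_take hm, List.take_append]
  by_cases hjm : j ≤ s.length - m
  · have hpeak := hmax (m + j) (by omega)
    rw [List.take_add, C_append] at hpeak
    rw [hdrop, Nat.sub_eq_zero_of_le hjm, List.take_zero, List.append_nil]
    omega
  · have hbelow := hfirst (j - (s.length - m)) (by omega)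
    rw [List.take_of_length_le (by omega), C_append, List.take_take, hdrop,
      Nat.min_eq_left (by omega)]
    omega

lemma krot_sub_eq_rotate (s : List ℕ) {m : ℕ} (hm : m ≤ s.length) :
    krot (s.length - m) s = s.rotate m := by
  rw [krot, Nat.sub_sub_self hm, List.rotate_eq_drop_append_take hm]

theorem stmt_6 (s : List ℕ) (hC : C s = 1) (hs : ¬ IsWF s) :
    ∃ k : ℕ, 0 < k ∧ k < s.length ∧ IsWF (krot k s) := by
  obtain ⟨m, hm, hmax, hfirst⟩ := exists_first_argmax (fun j => C (s.take j)) s.length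
  have hm0 : m ≠ 0 := by
    rintro rfl
    simpa [hC] using hmax s.length le_rfl
  have hmn : m ≠ s.length := by
    rintro rfl
    simp only [List.take_length, hC] at hfirst
    exact hs (isWF_of_C_take_lt s hC hfirst)
  refine ⟨s.length - m, by omega, by omega, ?_⟩
  rw [krot_sub_eq_rotate s hm]
  refine isWF_of_C_take_lt _ (by rw [C_rotate, hC]) fun j hj => ?_
  rw [List.length_rotate] at hj
  simpa [hC] using C_take_rotate_lt s (by rw [hC]; exact Int.one_pos) m hm hmax hfirst j hj
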